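/- Let a₁, a₂, b : ℝ∖{0} → ℂ satisfy, for all real k ≠ 0: conj(a₁(−k)) = a₁(k), conj(a₂(−k)) = a₂(k), a₁(k)a₂(k) + b(k)·conj(b(−k)) = 1, and a₁(k)a₂(k) ≠ 0; define r₁(k) = b(k)/a₁(k) and r₂(k) = conj(b(−k))/a₂(k). Then for all x, t ∈ ℝ and all real k ≠ 0 the jump matrix J satisfies the symmetry identity Λ · conj(J(−x,t,−k)) · Λ = [[a₂(k), 0],[0, 1/a₂(k)]] · J(x,t,k) · [[a₁(k), 0],[0, 1/a₁(k)]], where conj denotes entrywise complex conjugation. -/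

import Mathlib

/-!
Conjugation by Λ swaps both the rows and the columns of a 2 × 2 matrix, and the two diagonal
factors rescale the entries of J, so the identity can be checked entry by entry. The phase
φ = 2ikx + 4ik²t is purely imaginary and invariant under (x, k) ↦ (−x, −k), so conj(J(−x,t,−k))
carries the exponentials e^{±φ} of J(x,t,k), with r₁, r₂ replaced by conj r₁(−k), conj r₂(−k).
The symmetries of a₁, a₂ turn these into conj b(−k) / a₁ and b / a₂, which makes the off-diagonal
entries agree; the diagonal entries reduce to det S = a₁a₂ + b · conj b(−k) = 1.
-/

open Complex Matrix

noncomputable def Lam : Matrix (Fin 2) (Fin 2) ℂ := !![0, 1; 1, 0]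

/-- The jump matrix J(x,t,k) of the Riemann–Hilbert problem for the NNLS equation. -/
noncomputable def Jmat (r₁ r₂ : ℝ → ℂ) (x t k : ℝ) : Matrix (Fin 2) (Fin 2) ℂ :=
  !![1 + r₁ k * r₂ k, r₂ k * Complex.exp (-(2 * I * k * x) - 4 * I * k ^ 2 * t);
     r₁ k * Complex.exp (2 * I * k * x + 4 * I * k ^ 2 * t), 1]

open ComplexConjugate

theorem Matrix.swap_mul_mul_swap_fin_two {R : Type*} [Semiring R]
    (M : Matrix (Fin 2) (Fin 2) R) :
    !![0, 1; 1, 0] * M * !![0, 1; 1, 0] = !![M 1 1, M 1 0; M 0 1, M 0 0] := by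
  rw [eta_fin_two M]
  simp

theorem Matrix.diag_mul_mul_diag_fin_two {R : Type*} [Semiring R] (p q r s : R)
    (M : Matrix (Fin 2) (Fin 2) R) :
    !![p, 0; 0, q] * M * !![r, 0; 0, s]
      = !![p * M 0 0 * r, p * M 0 1 * s; q * M 1 0 * r, q * M 1 1 * s] := by
  rw [eta_fin_two M]
  simp [mul_assoc]

theorem map_conj_Jmat_neg (r₁ r₂ : ℝ → ℂ) (x t k : ℝ) :
    (Jmat r₁ r₂ (-x) t (-k)).map conj
      = !![1 + conj (r₁ (-k)) * conj (r₂ (-k)),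
            conj (r₂ (-k)) * exp (2 * I * k * x + 4 * I * k ^ 2 * t);
           conj (r₁ (-k)) * exp (-(2 * I * k * x) - 4 * I * k ^ 2 * t), 1] := by
  set φ : ℂ := 2 * I * k * x + 4 * I * k ^ 2 * t
  have hφ_conj : conj φ = -φ := by simp [φ, map_ofNat]; ring
  have hφ_neg : 2 * I * ↑(-k) * ↑(-x) + 4 * I * ↑(-k) ^ 2 * ↑t = φ := by push_cast; ring
  have hφ_neg' : -(2 * I * ↑(-k) * ↑(-x)) - 4 * I * ↑(-k) ^ 2 * ↑t = -φ := by push_cast; ring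
  have hφ' : -(2 * I * k * x) - 4 * I * k ^ 2 * t = -φ := by ring
  rw [Jmat, hφ_neg, hφ_neg', hφ']
  ext i j
  fin_cases i <;> fin_cases j <;> simp [← exp_conj, hφ_conj]

/-- Symmetry of the jump matrix of the RH problem of the NNLS equation:
Λ·conj(J(−x,t,−k))·Λ = diag(a₂,1/a₂)·J(x,t,k)·diag(a₁,1/a₁). -/
theorem jump_matrix_symmetry (a₁ a₂ b : ℝ → ℂ)
    (hsym₁ : ∀ k : ℝ, k ≠ 0 → (starRingEnd ℂ) (a₁ (-k)) = a₁ k)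
    (hsym₂ : ∀ k : ℝ, k ≠ 0 → (starRingEnd ℂ) (a₂ (-k)) = a₂ k)
    (hdet : ∀ k : ℝ, k ≠ 0 → a₁ k * a₂ k + b k * (starRingEnd ℂ) (b (-k)) = 1)
    (hne : ∀ k : ℝ, k ≠ 0 → a₁ k * a₂ k ≠ 0)
    (r₁ r₂ : ℝ → ℂ)
    (hr₁ : ∀ k : ℝ, k ≠ 0 → r₁ k = b k / a₁ k)
    (hr₂ : ∀ k : ℝ, k ≠ 0 → r₂ k = (starRingEnd ℂ) (b (-k)) / a₂ k) :
    ∀ (x t : ℝ) (k : ℝ), k ≠ 0 →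
      Lam * (Jmat r₁ r₂ (-x) t (-k)).map (starRingEnd ℂ) * Lam
        = !![a₂ k, 0; 0, 1 / a₂ k] * Jmat r₁ r₂ x t k * !![a₁ k, 0; 0, 1 / a₁ k] := by
  intro x t k hk
  obtain ⟨ha₁, ha₂⟩ := mul_ne_zero_iff.mp (hne k hk)
  have hconj_r₁ : conj (r₁ (-k)) = conj (b (-k)) / a₁ k := by
    rw [hr₁ (-k) (neg_ne_zero.mpr hk), map_div₀, hsym₁ k hk]
  have hconj_r₂ : conj (r₂ (-k)) = b k / a₂ k := by
    rw [hr₂ (-k) (neg_ne_zero.mpr hk), map_div₀, neg_neg, conj_conj, hsym₂ k hk]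
  rw [Lam, swap_mul_mul_swap_fin_two, map_conj_Jmat_neg, diag_mul_mul_diag_fin_two, Jmat]
  simp only [of_apply, cons_val', cons_val_zero, cons_val_one, empty_val', cons_val_fin_one,
    EmbeddingLike.apply_eq_iff_eq, vecCons_inj, and_true, hconj_r₁, hconj_r₂, hr₁ k hk, hr₂ k hk]
  refine ⟨⟨?_, by field_simp⟩, by field_simp, ?_⟩
  · field_simp
    linear_combination -hdet k hk
  · field_simp
    linear_combination hdet k hk
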